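/- Let g, h : ℝⁿ → ℝ be strongly convex with modulus σ > 0, with g differentiable, set φ := g − h, and let ρ > 0, λ_{−1} > 0. Let sequences (x^k), (y^k) in ℝⁿ, stepsizes t_k ∈ (0, λ_{−1}] and parameters ν_k ≥ 0 satisfy, for every k: ∇g(y^k) ∈ ∂h(x^k), d^k := y^k − x^k, x^{k+1} = y^k + t_k d^k, and φ(x^{k+1}) ≤ φ(x^k) − (σ + ρ t_k²) ‖d^k‖² + ν_k. Assume: (a) the parameters satisfy strategy (S3), i.e. for every δ > 0 there exists k₀ with ν_k ≤ δ ‖d^k‖² for all k ≥ k₀; (b) x* is a cluster point of (x^k); (c) ∇g is Lipschitz continuous on a ball B(x*, δ̂) for some δ̂ > 0 with constant L > 0; and (d) φ satisfies the Kurdyka–Łojasiewicz property at x* with respect to the set-valued map x ↦ { ∇g(x) − s : s ∈ ∂h(x) }, i.e. there exist η ∈ (0, +∞], a neighborhood U of x*, and a continuous concave function γ : [0, η) → [0, ∞) with γ(0) = 0, γ continuously differentiable on (0, η) with γ′(t) > 0 for all t ∈ (0, η), such that γ′(φ(x) − φ(x*)) · dist( 0, { ∇g(x) − s : s ∈ ∂h(x)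 } ) ≥ 1 for every x ∈ U with φ(x*) < φ(x) < φ(x*) + η. Then the whole sequence (x^k) converges to x*, and x* is a critical point of φ, i.e. ∂g(x*) ∩ ∂h(x*) ≠ ∅. -/

import Mathlib

/-!
Write `r k = φ(x k) - φ(x*)` and `d k = y k - x k`. Strategy (S3) with `δ = σ/2` turns the descent
inequality into the sufficient decrease `r (k+1) + σ/2 ‖d k‖² ≤ r k` for large `k`; with continuity
of `φ` along the subsequence converging to `x*` this gives `r k ↓ 0` and `d k → 0`. Near `x*`,
`g'(y k) ∈ ∂h(x k)` and the Lipschitz bound give `dist(0, ∂_C φ(x k)) ≤ L ‖d k‖`, and concavity of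
`γ` turns the KL inequality into `σ/2 ‖d k‖ ≤ L (γ(r k) - γ(r (k+1)))`. As
`‖x (k+1) - x k‖ ≤ (1 + λ₋₁) ‖d k‖`, the tail of `(x k)` from `K` on has length at most a multiple
of `γ(r K) → 0`, so once an iterate is close to `x*` the whole tail stays close to it. Finally
`g'(x*) ∈ ∂g(x*)` by convexity, and `g'(x*) ∈ ∂h(x*)` as the limit of `g'(y k) ∈ ∂h(x k)`.
-/

open Set Filter Topology

noncomputable section

/-- The (convex-analysis) subdifferential of `f` at `x`:
the set of `w` with `f z ≥ f x + ⟨w, z - x⟩` for all `z`. -/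
def subdiff {n : ℕ} (f : EuclideanSpace ℝ (Fin n) → ℝ) (x : EuclideanSpace ℝ (Fin n)) :
    Set (EuclideanSpace ℝ (Fin n)) :=
  {w | ∀ z, f x + (inner ℝ w (z - x) : ℝ) ≤ f z}

/-- `f` is strongly convex with modulus `σ`. -/
def StrongConvexWith {n : ℕ} (σ : ℝ) (f : EuclideanSpace ℝ (Fin n) → ℝ) : Prop :=
  ∀ x y : EuclideanSpace ℝ (Fin n), ∀ t : ℝ, 0 < t → t < 1 →
    f (t • x + (1 - t) • y) ≤ t * f x + (1 - t) * f y - σ / 2 * (t * (1 - t) * ‖x - y‖ ^ 2)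

theorem StrongConvexWith.convexOn {n : ℕ} {σ : ℝ} {f : EuclideanSpace ℝ (Fin n) → ℝ}
    (hσ : 0 ≤ σ) (hf : StrongConvexWith σ f) : ConvexOn ℝ univ f := by
  refine ⟨convex_univ, fun u _ v _ a b ha hb hab => ?_⟩
  obtain rfl | ha := ha.eq_or_lt
  · obtain rfl : b = 1 := by linarith
    simp
  obtain rfl | hb := hb.eq_or_lt
  · obtain rfl : a = 1 := by linarith
    simp
  obtain rfl : b = 1 - a := by linarith
  have hgap : 0 ≤ σ / 2 * (a * (1 - a) * ‖u - v‖ ^ 2) := by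
    have : 0 ≤ a * (1 - a) := mul_nonneg ha.le hb.le
    positivity
  simp only [smul_eq_mul]
  linarith [hf u v a ha (by linarith)]

theorem ConvexOn.hasGradientAt_mem_subdiff {n : ℕ} {f : EuclideanSpace ℝ (Fin n) → ℝ}
    (hf : ConvexOn ℝ univ f) {x v : EuclideanSpace ℝ (Fin n)} (hv : HasGradientAt f v x) :
    v ∈ subdiff f x := by
  intro z
  have hline : ConvexOn ℝ univ (f ∘ AffineMap.lineMap (k := ℝ) x z) := by
    simpa using hf.comp_affineMap (AffineMap.lineMap (k := ℝ) x z)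
  have hderiv : HasDerivAt (f ∘ AffineMap.lineMap (k := ℝ) x z) (inner ℝ v (z - x)) 0 := by
    have hv' := hasGradientAt_iff_hasFDerivAt.1 hv
    rw [← AffineMap.lineMap_apply_zero (k := ℝ) x z] at hv'
    simpa using hv'.comp_hasDerivAt (0 : ℝ) AffineMap.hasDerivAt_lineMap
  have := hline.le_slope_of_hasDerivAt (mem_univ 0) (mem_univ 1) one_pos hderiv
  simp only [slope_def_field, Function.comp_apply, AffineMap.lineMap_apply_one,
    AffineMap.lineMap_apply_zero, sub_zero, div_one] at this
  linarith

theorem mem_subdiff_of_tendsto {n : ℕ} {f : EuclideanSpace ℝ (Fin n) → ℝ} (hf : Continuous f)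
    {ι : Type*} {l : Filter ι} [l.NeBot] {x w : ι → EuclideanSpace ℝ (Fin n)}
    {a b : EuclideanSpace ℝ (Fin n)} (hw : ∀ i, w i ∈ subdiff f (x i))
    (hx : Tendsto x l (𝓝 a)) (hwb : Tendsto w l (𝓝 b)) : b ∈ subdiff f a := fun z =>
  le_of_tendsto' (((hf.tendsto a).comp hx).add (hwb.inner (tendsto_const_nhds.sub hx)))
    fun i => hw i z

theorem subdiff_inter_nonempty_of_tendsto {n : ℕ} {g h : EuclideanSpace ℝ (Fin n) → ℝ}
    {g' : EuclideanSpace ℝ (Fin n) → EuclideanSpace ℝ (Fin n)} {a : EuclideanSpace ℝ (Fin n)}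
    (hg : ConvexOn ℝ univ g) (hga : HasGradientAt g (g' a) a) (hg' : ContinuousAt g' a)
    (hh : Continuous h) {ι : Type*} {l : Filter ι} [l.NeBot] {x y : ι → EuclideanSpace ℝ (Fin n)}
    (hw : ∀ i, g' (y i) ∈ subdiff h (x i)) (hx : Tendsto x l (𝓝 a)) (hy : Tendsto y l (𝓝 a)) :
    (subdiff g a ∩ subdiff h a).Nonempty :=
  ⟨g' a, hg.hasGradientAt_mem_subdiff hga, mem_subdiff_of_tendsto hh hw hx (hg'.tendsto.comp hy)⟩

theorem one_le_mul_of_one_le_mul_sInf_norm_sub {E : Type*} [SeminormedAddCommGroup E]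
    {S : Set E} {v w : E} {c b : ℝ} (hw : w ∈ S) (hc : 0 ≤ c) (hb : ‖v - w‖ ≤ b)
    (h : 1 ≤ c * sInf {r : ℝ | ∃ s ∈ S, r = ‖v - s‖}) : 1 ≤ c * b := by
  have hinf : sInf {r : ℝ | ∃ s ∈ S, r = ‖v - s‖} ≤ ‖v - w‖ :=
    csInf_le ⟨0, by rintro _ ⟨s, -, rfl⟩; exact norm_nonneg _⟩ ⟨w, hw, rfl⟩
  exact h.trans (by gcongr; exact hinf.trans hb)

theorem continuousAt_of_norm_sub_le_mul {E F : Type*} [SeminormedAddCommGroup E]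
    [SeminormedAddCommGroup F] {f : E → F} {a : E} {δ L : ℝ} (hδ : 0 < δ)
    (hf : ∀ u ∈ Metric.ball a δ, ∀ v ∈ Metric.ball a δ, ‖f u - f v‖ ≤ L * ‖u - v‖) :
    ContinuousAt f a :=
  (LipschitzOnWith.of_dist_le_mul (K := L.toNNReal) fun u hu v hv => by
    simpa [dist_eq_norm] using (hf u hu v hv).trans (by gcongr; exact L.le_coe_toNNReal))
    |>.continuousOn.continuousAt (Metric.ball_mem_nhds a hδ)

theorem setOf_nonneg_and_ofReal_lt_mem_nhdsGE {η : ENNReal} (hη : 0 < η) :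
    {s : ℝ | 0 ≤ s ∧ ENNReal.ofReal s < η} ∈ 𝓝[≥] 0 :=
  inter_mem self_mem_nhdsWithin (mem_nhdsWithin_of_mem_nhds
    ((isOpen_lt ENNReal.continuous_ofReal continuous_const).mem_nhds (by simpa using hη)))

theorem dist_add_smul_sub_le {E : Type*} [SeminormedAddCommGroup E] [NormedSpace ℝ E]
    {x y : E} {t c : ℝ} (ht : 0 ≤ t) (htc : t ≤ c) :
    dist (y + t • (y - x)) x ≤ (1 + c) * ‖y - x‖ := by
  rw [dist_eq_norm, show y + t • (y - x) - x = (1 + t) • (y - x) by module, norm_smul,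
    Real.norm_of_nonneg (by linarith)]
  gcongr

theorem tendsto_of_succ_le_of_subseq {r : ℕ → ℝ} {k₀ : ℕ} {ψ : ℕ → ℕ} {l : ℝ}
    (hr : ∀ k ≥ k₀, r (k + 1) ≤ r k) (hψ : Tendsto ψ atTop atTop)
    (hrψ : Tendsto (r ∘ ψ) atTop (𝓝 l)) : Tendsto r atTop (𝓝 l) ∧ ∀ k ≥ k₀, l ≤ r k := by
  have hanti : Antitone fun m => r (m + k₀) :=
    antitone_nat_of_succ_le fun m => by simpa [add_right_comm] using hr (m + k₀) (by omega)
  have hlim : Tendsto (fun m => r (m + k₀)) atTop (𝓝 l) := by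
    refine (tendsto_iff_tendsto_subseq_of_antitone hanti
      ((tendsto_sub_atTop_nat k₀).comp hψ)).2 (hrψ.congr' ?_)
    filter_upwards [hψ.eventually_ge_atTop k₀] with ℓ hℓ
    simp [Nat.sub_add_cancel hℓ]
  refine ⟨(tendsto_add_atTop_iff_nat k₀).1 hlim, fun k hk => ?_⟩
  simpa [Nat.sub_add_cancel hk] using hanti.le_of_tendsto hlim (k - k₀)

theorem tendsto_zero_of_add_mul_sq_le {r δ : ℕ → ℝ} {α l : ℝ} (hα : 0 < α)
    (hδ : ∀ k, 0 ≤ δ k) (hdec : ∀ᶠ k in atTop, r (k + 1) + α * δ k ^ 2 ≤ r k)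
    (hr : Tendsto r atTop (𝓝 l)) : Tendsto δ atTop (𝓝 0) := by
  have hgap : Tendsto (fun k => √((r k - r (k + 1)) / α)) atTop (𝓝 0) := by
    simpa using ((hr.sub (hr.comp (tendsto_add_atTop_nat 1))).div_const α).sqrt
  refine squeeze_zero' (Eventually.of_forall hδ) ?_ hgap
  filter_upwards [hdec] with k hk
  rw [Real.le_sqrt (hδ k) (div_nonneg (by nlinarith [hδ k]) hα.le), le_div_iff₀ hα]
  linarith

theorem ConcaveOn.mul_le_mul_sub_of_one_le_mul {S : Set ℝ} {γ γ' : ℝ → ℝ}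
    (hγ : ConcaveOn ℝ S γ) {α β δ s s' : ℝ} (hα : 0 < α) (hβ : 0 ≤ β) (hδ : 0 ≤ δ)
    (hs : s ∈ S) (hs' : s' ∈ S) (hs'0 : 0 ≤ s') (hdec : s' + α * δ ^ 2 ≤ s)
    (hderiv : 0 < s → HasDerivAt γ (γ' s) s) (hKL : 0 < s → 1 ≤ γ' s * (β * δ)) :
    α * δ ≤ β * (γ s - γ s') := by
  obtain rfl | hlt := (show s' ≤ s by nlinarith).eq_or_lt
  · simp only [sub_self, mul_zero]
    nlinarith
  have hpos : 0 < s := hs'0.trans_lt hlt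
  have htan : γ' s * (s - s') ≤ γ s - γ s' := by
    have := hγ.le_slope_of_hasDerivAt hs' hs hlt (hderiv hpos)
    rwa [slope_def_field, le_div_iff₀ (sub_pos.2 hlt)] at this
  have hγ' : 0 ≤ γ' s := by
    by_contra! hneg
    nlinarith [hKL hpos, mul_nonneg hβ hδ]
  calc α * δ ≤ α * δ * (γ' s * (β * δ)) := le_mul_of_one_le_right (by positivity) (hKL hpos)
    _ = β * (γ' s * (α * δ ^ 2)) := by ring
    _ ≤ β * (γ' s * (s - s')) := by gcongr; linarith
    _ ≤ β * (γ s - γ s') := by gcongr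

theorem tendsto_of_dist_succ_le_sub {X : Type*} [PseudoMetricSpace X] {x : ℕ → X} {a : X}
    {ψ : ℕ → ℕ} {Γ : ℕ → ℝ} {V : Set X} (hψ : Tendsto ψ atTop atTop)
    (hxψ : Tendsto (x ∘ ψ) atTop (𝓝 a)) (hΓ : Tendsto Γ atTop (𝓝 0)) (hV : V ∈ 𝓝 a)
    (hstep : ∀ᶠ k in atTop, x k ∈ V → dist (x (k + 1)) (x k) ≤ Γ k - Γ (k + 1)) :
    Tendsto x atTop (𝓝 a) := by
  obtain ⟨ε₀, hε₀, hballV⟩ := Metric.mem_nhds_iff.1 hV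
  suffices h : ∀ ε, 0 < ε → ε ≤ ε₀ → ∀ᶠ m in atTop, dist (x m) a < ε by
    refine Metric.tendsto_nhds.2 fun ε hε => ?_
    filter_upwards [h (min ε ε₀) (lt_min hε hε₀) (min_le_right _ _)] with m hm
    exact hm.trans_le (min_le_left _ _)
  intro ε hε hεε₀
  have hΓsmall : ∀ᶠ k in atTop, |Γ k| < ε / 4 := by
    simpa [Real.dist_eq] using Metric.tendsto_nhds.1 hΓ (ε / 4) (by positivity)
  obtain ⟨K₁, hK₁⟩ := eventually_atTop.1 (hstep.and hΓsmall)
  obtain ⟨ℓ, hℓK₁, hℓa⟩ := ((hψ.eventually_ge_atTop K₁).and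
    (Metric.tendsto_nhds.1 hxψ (ε / 2) (by positivity))).exists
  set K := ψ ℓ
  have hnear : ∀ m ≥ K, dist (x m) (x K) ≤ Γ K - Γ m → dist (x m) a < ε := fun m hm hmK => by
    have hΓK := abs_lt.1 (hK₁ K hℓK₁).2
    have hΓm := abs_lt.1 (hK₁ m (hℓK₁.trans hm)).2
    have hℓa : dist (x K) a < ε / 2 := hℓa
    linarith [dist_triangle (x m) (x K) a]
  have htail : ∀ m ≥ K, dist (x m) (x K) ≤ Γ K - Γ m := by
    intro m hm
    induction m, hm using Nat.le_induction with
    | base => simp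
    | succ m hm ih =>
      have hxm : x m ∈ V := hballV (Metric.ball_subset_ball hεε₀ (hnear m hm ih))
      calc dist (x (m + 1)) (x K) ≤ dist (x (m + 1)) (x m) + dist (x m) (x K) :=
            dist_triangle _ _ _
        _ ≤ (Γ m - Γ (m + 1)) + (Γ K - Γ m) := add_le_add ((hK₁ m (hℓK₁.trans hm)).1 hxm) ih
        _ = Γ K - Γ (m + 1) := by ring
  filter_upwards [eventually_ge_atTop K] with m hm
  exact hnear m hm (htail m hm)

theorem tendsto_of_sufficient_decrease_of_kl {X : Type*} [PseudoMetricSpace X] {x : ℕ → X}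
    {a : X} {ψ : ℕ → ℕ} {r δ : ℕ → ℝ} {S : Set ℝ} {γ γ' : ℝ → ℝ} {V : Set X} {α β c : ℝ}
    (hψ : Tendsto ψ atTop atTop) (hxψ : Tendsto (x ∘ ψ) atTop (𝓝 a)) (hV : V ∈ 𝓝 a)
    (hα : 0 < α) (hβ : 0 ≤ β) (hc : 0 ≤ c) (hδ : ∀ k, 0 ≤ δ k)
    (hr : Tendsto r atTop (𝓝 0)) (hr0 : ∀ᶠ k in atTop, 0 ≤ r k)
    (hdec : ∀ᶠ k in atTop, r (k + 1) + α * δ k ^ 2 ≤ r k)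
    (hstep : ∀ k, dist (x (k + 1)) (x k) ≤ c * δ k)
    (hS : S ∈ 𝓝[≥] 0) (hγ0 : γ 0 = 0) (hγcont : ContinuousWithinAt γ S 0)
    (hγconc : ConcaveOn ℝ S γ) (hγ' : ∀ s ∈ S, 0 < s → HasDerivAt γ (γ' s) s)
    (hKL : ∀ᶠ k in atTop, x k ∈ V → 0 < r k → r k ∈ S → 1 ≤ γ' (r k) * (β * δ k)) :
    Tendsto x atTop (𝓝 a) := by
  have hrS : ∀ᶠ k in atTop, r k ∈ S := tendsto_nhdsWithin_iff.2 ⟨hr, hr0⟩ hS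
  have hΓ : Tendsto (fun k => c * β / α * γ (r k)) atTop (𝓝 0) := by
    simpa [hγ0] using
      (hγcont.tendsto.comp (tendsto_nhdsWithin_iff.2 ⟨hr, hrS⟩)).const_mul (c * β / α)
  refine tendsto_of_dist_succ_le_sub hψ hxψ hΓ hV ?_
  filter_upwards [hdec, hrS, (tendsto_add_atTop_nat 1).eventually hrS,
    (tendsto_add_atTop_nat 1).eventually hr0, hKL] with k hdeck hs hs' hs'0 hKLk hxk
  have hlen := hγconc.mul_le_mul_sub_of_one_le_mul hα hβ (hδ k) hs hs' hs'0 hdeck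
    (hγ' _ hs) fun hpos => hKLk hxk hpos hs
  calc dist (x (k + 1)) (x k) ≤ c * δ k := hstep k
    _ ≤ c * (β * (γ (r k) - γ (r (k + 1))) / α) := by
      gcongr
      rwa [le_div_iff₀ hα, mul_comm]
    _ = c * β / α * γ (r k) - c * β / α * γ (r (k + 1)) := by ring

theorem stmt19_general {n : ℕ} (g h : EuclideanSpace ℝ (Fin n) → ℝ)
    (g' : EuclideanSpace ℝ (Fin n) → EuclideanSpace ℝ (Fin n)) (σ ρ lamm1 : ℝ)
    (hσ : 0 < σ) (hρ : 0 < ρ) (hlamm1 : 0 < lamm1)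
    (hgs : StrongConvexWith σ g) (hhs : StrongConvexWith σ h)
    (hgrad : ∀ z, HasGradientAt g (g' z) z)
    (x y : ℕ → EuclideanSpace ℝ (Fin n)) (t ν : ℕ → ℝ)
    (ht : ∀ k, 0 < t k ∧ t k ≤ lamm1)
    (hw : ∀ k, g' (y k) ∈ subdiff h (x k))
    (hstep : ∀ k, x (k + 1) = y k + t k • (y k - x k))
    (hdec : ∀ k, g (x (k + 1)) - h (x (k + 1)) ≤
      (g (x k) - h (x k)) - (σ + ρ * t k ^ 2) * ‖y k - x k‖ ^ 2 + ν k)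
    (hS3 : ∀ δ : ℝ, 0 < δ → ∃ k₀ : ℕ, ∀ k ≥ k₀, ν k ≤ δ * ‖y k - x k‖ ^ 2)
    (xstar : EuclideanSpace ℝ (Fin n))
    (hcl : ∃ φ : ℕ → ℕ, StrictMono φ ∧
      Filter.Tendsto (fun ℓ => x (φ ℓ)) Filter.atTop (nhds xstar))
    (δhat L : ℝ) (hδhat : 0 < δhat) (hL : 0 < L)
    (hlip : ∀ u ∈ Metric.ball xstar δhat, ∀ v ∈ Metric.ball xstar δhat,
      ‖g' u - g' v‖ ≤ L * ‖u - v‖)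
    (η : ENNReal) (hη : 0 < η)
    (U : Set (EuclideanSpace ℝ (Fin n))) (hU : U ∈ nhds xstar)
    (γ γ' : ℝ → ℝ)
    (hγ0 : γ 0 = 0)
    (hγcont : ContinuousOn γ {s : ℝ | 0 ≤ s ∧ ENNReal.ofReal s < η})
    (hγconc : ConcaveOn ℝ {s : ℝ | 0 ≤ s ∧ ENNReal.ofReal s < η} γ)
    (hγderiv : ∀ s : ℝ, 0 < s → ENNReal.ofReal s < η → HasDerivAt γ (γ' s) s)
    (hγ'pos : ∀ s : ℝ, 0 < s → ENNReal.ofReal s < η → 0 < γ' s)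
    (hKL : ∀ z ∈ U, (g xstar - h xstar) < (g z - h z) →
      ENNReal.ofReal ((g z - h z) - (g xstar - h xstar)) < η →
      1 ≤ γ' ((g z - h z) - (g xstar - h xstar)) *
        sInf {r : ℝ | ∃ s ∈ subdiff h z, r = ‖g' z - s‖}) :
    Filter.Tendsto x Filter.atTop (nhds xstar) ∧
      (subdiff g xstar ∩ subdiff h xstar).Nonempty := by
  obtain ⟨ψ, hψ, hxψ⟩ := hcl
  have hhcont : Continuous h := (hhs.convexOn hσ.le).locallyLipschitz.continuous
  have hgcont : Continuous g := continuous_iff_continuousAt.2 fun z => (hgrad z).continuousAt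
  set r : ℕ → ℝ := fun k => (g (x k) - h (x k)) - (g xstar - h xstar)
  obtain ⟨k₀, hk₀⟩ := hS3 (σ / 2) (half_pos hσ)
  have hdecr : ∀ k ≥ k₀, r (k + 1) + σ / 2 * ‖y k - x k‖ ^ 2 ≤ r k := fun k hk => by
    nlinarith [hdec k, hk₀ k hk, mul_nonneg (mul_nonneg hρ.le (sq_nonneg (t k)))
      (sq_nonneg ‖y k - x k‖)]
  obtain ⟨hr, hr0⟩ := tendsto_of_succ_le_of_subseq (r := r)
    (fun k hk => (le_add_of_nonneg_right (by positivity)).trans (hdecr k hk)) hψ.tendsto_atTop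
    (by simpa [r, Function.comp_def] using
      (((hgcont.sub hhcont).tendsto xstar).comp hxψ).sub_const (g xstar - h xstar))
  have hd := tendsto_zero_of_add_mul_sq_le (half_pos hσ) (fun k => norm_nonneg _)
    (eventually_atTop.2 ⟨k₀, hdecr⟩) hr
  have hx : Tendsto x atTop (𝓝 xstar) := by
    refine tendsto_of_sufficient_decrease_of_kl hψ.tendsto_atTop hxψ
      (inter_mem hU (Metric.ball_mem_nhds xstar (half_pos hδhat))) (half_pos hσ) hL.le
      (by linarith) (fun k => norm_nonneg _) hr (eventually_atTop.2 ⟨k₀, hr0⟩)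
      (eventually_atTop.2 ⟨k₀, hdecr⟩)
      (fun k => hstep k ▸ dist_add_smul_sub_le (ht k).1.le (ht k).2)
      (setOf_nonneg_and_ofReal_lt_mem_nhdsGE hη) hγ0 (hγcont 0 ⟨le_rfl, by simpa using hη⟩)
      hγconc (fun s hs hs0 => hγderiv s hs0 hs.2) ?_
    filter_upwards [Metric.tendsto_nhds.1 hd (δhat / 2) (half_pos hδhat)]
      with k hdk ⟨hxU, hxk⟩ hrk hrS
    have hyk : y k ∈ Metric.ball xstar δhat := by
      rw [Real.dist_eq, sub_zero, abs_norm] at hdk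
      rw [Metric.mem_ball] at hxk ⊢
      linarith [dist_triangle (y k) (x k) xstar, dist_eq_norm (y k) (x k)]
    refine one_le_mul_of_one_le_mul_sInf_norm_sub (hw k) (hγ'pos _ hrk hrS.2).le ?_
      (hKL (x k) hxU (sub_pos.1 hrk) hrS.2)
    simpa [norm_sub_rev] using
      hlip _ (Metric.ball_subset_ball (half_le_self hδhat.le) hxk) _ hyk
  exact ⟨hx, subdiff_inter_nonempty_of_tendsto (hgs.convexOn hσ.le) (hgrad xstar)
    (continuousAt_of_norm_sub_le_mul hδhat hlip) hhcont hw hx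
    (by simpa using hx.add (tendsto_zero_iff_norm_tendsto_zero.2 hd))⟩

theorem stmt19 {n : ℕ} (g h : EuclideanSpace ℝ (Fin n) → ℝ)
    (g' : EuclideanSpace ℝ (Fin n) → EuclideanSpace ℝ (Fin n)) (σ ρ lamm1 : ℝ)
    (hσ : 0 < σ) (hρ : 0 < ρ) (hlamm1 : 0 < lamm1)
    (hgs : StrongConvexWith σ g) (hhs : StrongConvexWith σ h)
    (hgrad : ∀ z, HasGradientAt g (g' z) z)
    (x y : ℕ → EuclideanSpace ℝ (Fin n)) (t ν : ℕ → ℝ)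
    (ht : ∀ k, 0 < t k ∧ t k ≤ lamm1) (hν : ∀ k, 0 ≤ ν k)
    (hw : ∀ k, g' (y k) ∈ subdiff h (x k))
    (hstep : ∀ k, x (k + 1) = y k + t k • (y k - x k))
    (hdec : ∀ k, g (x (k + 1)) - h (x (k + 1)) ≤
      (g (x k) - h (x k)) - (σ + ρ * t k ^ 2) * ‖y k - x k‖ ^ 2 + ν k)
    (hS3 : ∀ δ : ℝ, 0 < δ → ∃ k₀ : ℕ, ∀ k ≥ k₀, ν k ≤ δ * ‖y k - x k‖ ^ 2)
    (xstar : EuclideanSpace ℝ (Fin n))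
    (hcl : ∃ φ : ℕ → ℕ, StrictMono φ ∧
      Filter.Tendsto (fun ℓ => x (φ ℓ)) Filter.atTop (nhds xstar))
    (δhat L : ℝ) (hδhat : 0 < δhat) (hL : 0 < L)
    (hlip : ∀ u ∈ Metric.ball xstar δhat, ∀ v ∈ Metric.ball xstar δhat,
      ‖g' u - g' v‖ ≤ L * ‖u - v‖)
    (η : ENNReal) (hη : 0 < η)
    (U : Set (EuclideanSpace ℝ (Fin n))) (hU : U ∈ nhds xstar)
    (γ γ' : ℝ → ℝ)
    (hγ0 : γ 0 = 0)
    (hγnonneg : ∀ s : ℝ, 0 ≤ s → ENNReal.ofReal s < η → 0 ≤ γ s)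
    (hγcont : ContinuousOn γ {s : ℝ | 0 ≤ s ∧ ENNReal.ofReal s < η})
    (hγconc : ConcaveOn ℝ {s : ℝ | 0 ≤ s ∧ ENNReal.ofReal s < η} γ)
    (hγderiv : ∀ s : ℝ, 0 < s → ENNReal.ofReal s < η → HasDerivAt γ (γ' s) s)
    (hγ'cont : ContinuousOn γ' {s : ℝ | 0 < s ∧ ENNReal.ofReal s < η})
    (hγ'pos : ∀ s : ℝ, 0 < s → ENNReal.ofReal s < η → 0 < γ' s)
    (hKL : ∀ z ∈ U, (g xstar - h xstar) < (g z - h z) →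
      ENNReal.ofReal ((g z - h z) - (g xstar - h xstar)) < η →
      1 ≤ γ' ((g z - h z) - (g xstar - h xstar)) *
        sInf {r : ℝ | ∃ s ∈ subdiff h z, r = ‖g' z - s‖}) :
    Filter.Tendsto x Filter.atTop (nhds xstar) ∧
      (subdiff g xstar ∩ subdiff h xstar).Nonempty :=
  stmt19_general g h g' σ ρ lamm1 hσ hρ hlamm1 hgs hhs hgrad x y t ν ht hw hstep hdec hS3 xstar hcl
    δhat L hδhat hL hlip η hη U hU γ γ' hγ0 hγcont hγconc hγderiv hγ'pos hKL

end
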